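/- arXiv:1312.2569 — 2 statements merged into one kernel-verified Lean document; each statement's English description precedes it below -/
import Mathlib

section
/- A positive integer M is a value of Landau's function (i.e., there exists n with M = g(n)) if and only if every integer M′ > M satisfies ℓ(M′) > ℓ(M). -/
/-- Landau's function: the maximal order of an element of the symmetric group `S_n`. -/
noncomputable def landau (n : ℕ) : ℕ :=
  Finset.univ.sup fun σ : Equiv.Perm (Fin n) => orderOf σ

/-- The additive function `ℓ` with `ℓ(1) = 0` and `ℓ(p^k) = p^k` for primes `p` and `k ≥ 1`. -/
def ell (M : ℕ) : ℕ := ∑ p ∈ M.primeFactors, p ^ M.factorization p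

/-!
The orders of permutations of an `n`-element set are exactly the `M ≠ 0` with `ℓ(M) ≤ n`.
Indeed the order of a permutation is the lcm of its cycle lengths, and `ℓ` of an lcm is at most
the sum of the arguments because `ℓ(a) ≤ a`; conversely, disjoint cycles of the lengths `p^k`
exactly dividing `M` use `ℓ(M)` points and have order `M`. Hence `g(n)` is the largest `M` with
`ℓ(M) ≤ n`, and both directions of the theorem follow, with `n = ℓ(M)` for the converse.
-/

open Equiv Finset

theorem Finset.sum_le_prod_of_two_le {ι : Type*} {s : Finset ι} {f : ι → ℕ}
    (hf : ∀ i ∈ s, 2 ≤ f i) : ∑ i ∈ s, f i ≤ ∏ i ∈ s, f i := by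
  induction s using Finset.cons_induction with
  | empty => simp
  | cons a s ha ih =>
    rw [forall_mem_cons] at hf
    rw [sum_cons, prod_cons]
    rcases s.eq_empty_or_nonempty with rfl | ⟨b, hb⟩
    · simp
    have hprod : 2 ≤ ∏ i ∈ s, f i :=
      (hf.2 b hb).trans (single_le_prod' (fun i hi => one_le_two.trans (hf.2 i hi)) hb)
    calc f a + ∑ i ∈ s, f i ≤ f a + ∏ i ∈ s, f i := by gcongr; exact ih hf.2
      _ ≤ f a * ∏ i ∈ s, f i := add_le_mul hf.1 hprod

theorem Nat.lcm_primeFactors_pow_factorization {M : ℕ} (hM : M ≠ 0) :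
    M.primeFactors.lcm (fun p => p ^ M.factorization p) = M := by
  rw [lcm_eq_prod, ← Nat.prod_primeFactors_pow_factorization hM]
  intro p hp q hq hpq
  exact Nat.coprime_pow_primes _ _ (Nat.prime_of_mem_primeFactors hp)
    (Nat.prime_of_mem_primeFactors hq) hpq

theorem Nat.two_le_pow_factorization_of_mem_primeFactors {M p : ℕ} (hp : p ∈ M.primeFactors) :
    2 ≤ p ^ M.factorization p :=
  (Nat.prime_of_mem_primeFactors hp).two_le.trans
    (Nat.le_self_pow (Finsupp.mem_support_iff.mp hp) p)

theorem ell_le_self (M : ℕ) : ell M ≤ M := by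
  rcases eq_or_ne M 0 with rfl | hM
  · simp [ell]
  conv_rhs => rw [Nat.prod_primeFactors_pow_factorization hM]
  exact sum_le_prod_of_two_le fun p => Nat.two_le_pow_factorization_of_mem_primeFactors

theorem ell_lcm_le (a b : ℕ) : ell (a.lcm b) ≤ ell a + ell b := by
  rcases eq_or_ne a 0 with rfl | ha
  · simp [ell]
  rcases eq_or_ne b 0 with rfl | hb
  · simp [ell]
  have hfac := Nat.factorization_lcm ha hb
  have hsupp : (a.lcm b).primeFactors = a.primeFactors ∪ b.primeFactors := by
    simp only [← Nat.support_factorization, hfac, Finsupp.support_sup]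
  -- `max (v_p a) (v_p b)` is one of the two valuations, and it is nonzero, so `p` divides
  -- the corresponding number
  have key : ∀ p ∈ (a.lcm b).primeFactors, p ^ (a.lcm b).factorization p ≤
      (if p ∈ a.primeFactors then p ^ a.factorization p else 0) +
      (if p ∈ b.primeFactors then p ^ b.factorization p else 0) := by
    intro p hp
    simp only [← Nat.support_factorization, Finsupp.mem_support_iff, hfac, Finsupp.sup_apply]
      at hp ⊢
    rcases max_choice (a.factorization p) (b.factorization p) with h | h <;>
      simp only [h] at hp ⊢
    · rw [if_pos hp]; exact Nat.le_add_right _ _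
    · rw [if_pos hp]; exact Nat.le_add_left _ _
  calc ell (a.lcm b) ≤ _ := sum_le_sum key
    _ = ell a + ell b := by
      rw [sum_add_distrib, sum_ite_mem, sum_ite_mem, hsupp, union_inter_cancel_left,
        union_inter_cancel_right, ell, ell]

theorem ell_multiset_lcm_le (s : Multiset ℕ) : ell s.lcm ≤ s.sum := by
  induction s using Multiset.induction_on with
  | empty => simp [ell]
  | cons a s ih =>
    rw [Multiset.lcm_cons, Multiset.sum_cons]
    exact (ell_lcm_le a s.lcm).trans (add_le_add (ell_le_self a) ih)

theorem exists_perm_orderOf_eq_iff {α : Type*} [Fintype α] [DecidableEq α] {M : ℕ} :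
    (∃ σ : Perm α, orderOf σ = M) ↔ M ≠ 0 ∧ ell M ≤ Fintype.card α := by
  constructor
  · rintro ⟨σ, rfl⟩
    refine ⟨(orderOf_pos σ).ne', ?_⟩
    rw [← σ.lcm_cycleType]
    exact (ell_multiset_lcm_le σ.cycleType).trans σ.sum_cycleType_le
  · rintro ⟨hM, hell⟩
    set m := M.primeFactors.val.map fun p => p ^ M.factorization p
    have htwo : ∀ k ∈ m, 2 ≤ k := by
      simp only [m, Multiset.mem_map, mem_val]
      rintro _ ⟨p, hp, rfl⟩
      exact Nat.two_le_pow_factorization_of_mem_primeFactors hp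
    obtain ⟨σ, hσ⟩ := (Perm.exists_with_cycleType_iff α (m := m)).mpr ⟨hell, htwo⟩
    refine ⟨σ, ?_⟩
    rw [← σ.lcm_cycleType, hσ, ← lcm_def, Nat.lcm_primeFactors_pow_factorization hM]

theorem isGreatest_landau (n : ℕ) : IsGreatest {M | M ≠ 0 ∧ ell M ≤ n} (landau n) := by
  obtain ⟨σ, -, hσ⟩ := exists_mem_eq_sup univ univ_nonempty fun σ : Perm (Fin n) => orderOf σ
  refine ⟨?_, fun M hM => ?_⟩
  · simpa [landau, hσ] using exists_perm_orderOf_eq_iff.mp ⟨σ, rfl⟩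
  · obtain ⟨τ, rfl⟩ := exists_perm_orderOf_eq_iff (α := Fin n) |>.mpr (by simpa using hM)
    exact le_sup (mem_univ τ)

/-- A positive integer `M` is a value of Landau's function if and only if
every integer `M' > M` satisfies `ℓ(M') > ℓ(M)`. -/
theorem mem_range_landau_iff (M : ℕ) (hM : 1 ≤ M) :
    (∃ n : ℕ, M = landau n) ↔ ∀ M' : ℕ, M < M' → ell M < ell M' := by
  constructor
  · rintro ⟨n, rfl⟩ M' hlt
    by_contra! hle
    exact hlt.not_ge ((isGreatest_landau n).2 ⟨by omega, hle.trans (isGreatest_landau n).1.2⟩)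
  · intro h
    refine ⟨ell M, le_antisymm ((isGreatest_landau _).2 ⟨by omega, le_rfl⟩) ?_⟩
    by_contra! hlt
    exact (h _ hlt).not_ge (isGreatest_landau _).1.2
end

section
/- Let ρ > 2/log 2, let x > 4 be the unique real with ρ = x/log x, let N = N_ρ, and define ben(M) = ℓ(M) − ℓ(N) − ρ·log(M/N) for positive integers M. Then: (a) for every prime p and every integer t ≥ 1, ben(N·p^t) ≥ t·ben(N·p); and (b) for every prime p ≤ x and every integer t with 1 ≤ t ≤ α_p, ben(N/p^t) ≥ t·ben(N/p) (note that p^{α_p} divides N, so N/p^t is an integer). -/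
/-- `(ℓ(p^k) - ℓ(p^{k-1})) / log p`, the cost of raising the exponent of `p` from `k-1` to `k`. -/
noncomputable def ellCost (p k : ℕ) : ℝ :=
  ((ell (p ^ k) : ℝ) - (ell (p ^ (k - 1)) : ℝ)) / Real.log p

/-- The exponent `α_p` of the prime `p` in `N_ρ`, where `ρ = x / log x`:
`α_p = 0` for `p > x`, and otherwise `α_p` is the (largest) `k ≥ 1` with
`(p^k - p^{k-1})/log p ≤ ρ < (p^{k+1} - p^k)/log p` (here `p^1 - p^0` is to be read as `p`,
i.e. as `ℓ(p^1) - ℓ(p^0)`). -/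
noncomputable def alphaExp (x : ℝ) (p : ℕ) : ℕ :=
  if (p : ℝ) ≤ x then sSup {k : ℕ | 1 ≤ k ∧ ellCost p k ≤ x / Real.log x} else 0

/-- Ramanujan's superior champion `N_ρ = ∏_{p ≤ x} p^{α_p}`, with `ρ = x / log x`. -/
noncomputable def Nrho (x : ℝ) : ℕ :=
  ∏ p ∈ (Finset.range (⌊x⌋₊ + 1)).filter Nat.Prime, p ^ alphaExp x p

/-- The benefit `ben(M) = ℓ(M) - ℓ(N_ρ) - ρ log(M/N_ρ)`, where `ρ = x / log x`. -/
noncomputable def benefit (x : ℝ) (M : ℕ) : ℝ :=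
  (ell M : ℝ) - (ell (Nrho x) : ℝ) - x / Real.log x * Real.log ((M : ℝ) / (Nrho x : ℝ))

open Finset

section MonotoneIncrements

variable {f : ℕ → ℝ} (hf : Monotone fun k => f (k + 1) - f k)
include hf

theorem mul_forward_diff_le_of_monotone_diff (v t : ℕ) :
    t * (f (v + 1) - f v) ≤ f (v + t) - f v := by
  have hsum : f (v + t) - f v = ∑ i ∈ range t, (f (v + (i + 1)) - f (v + i)) := by
    rw [sum_range_sub (fun i => f (v + i)) t, add_zero]
  have hle := card_nsmul_le_sum (range t) (fun i => f (v + (i + 1)) - f (v + i))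
    (f (v + 1) - f v) fun i _ => hf (Nat.le_add_right v i)
  rwa [card_range, nsmul_eq_mul, ← hsum] at hle

theorem mul_backward_diff_le_of_monotone_diff {v t : ℕ} (ht : t ≤ v) :
    t * (f (v - 1) - f v) ≤ f (v - t) - f v := by
  obtain ⟨u, rfl⟩ := Nat.exists_eq_add_of_le' ht
  rcases t with _ | s
  · simp
  have hsum : f (u + (s + 1)) - f u = ∑ i ∈ range (s + 1), (f (u + (i + 1)) - f (u + i)) := by
    rw [sum_range_sub (fun i => f (u + i)) (s + 1), add_zero]
  have hle := sum_le_card_nsmul (range (s + 1)) (fun i => f (u + (i + 1)) - f (u + i))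
    (f (u + (s + 1)) - f (u + s)) fun i hi =>
      hf (Nat.add_le_add_left (Nat.lt_succ_iff.mp (mem_range.mp hi)) u)
  rw [card_range, nsmul_eq_mul] at hle
  rw [Nat.add_sub_cancel, show u + (s + 1) - 1 = u + s by omega]
  linarith

end MonotoneIncrements

theorem ell_prime_pow {p : ℕ} (hp : p.Prime) (k : ℕ) :
    ell (p ^ k) = if k = 0 then 0 else p ^ k := by
  split_ifs with hk
  · simp [hk, ell]
  · simp [ell, Nat.primeFactors_pow _ hk, hp.primeFactors, hp.factorization_pow]

theorem ell_mul_of_coprime {m n : ℕ} (hm : m ≠ 0) (hn : n ≠ 0) (h : m.Coprime n) :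
    ell (m * n) = ell m + ell n := by
  have hd : Disjoint m.primeFactors n.primeFactors := h.disjoint_primeFactors
  rw [ell, Nat.primeFactors_mul hm hn, sum_union hd, Nat.factorization_mul hm hn]
  congr 1 <;> refine sum_congr rfl fun q hq => ?_
  · have : n.factorization q = 0 :=
      Finsupp.notMem_support_iff.mp (disjoint_left.mp hd hq)
    simp [this]
  · have : m.factorization q = 0 :=
      Finsupp.notMem_support_iff.mp (disjoint_right.mp hd hq)
    simp [this]

theorem monotone_ell_prime_pow_diff {p : ℕ} (hp : p.Prime) :
    Monotone fun k => (ell (p ^ (k + 1)) : ℝ) - ell (p ^ k) := by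
  have hp2 : (2 : ℝ) ≤ p := by exact_mod_cast hp.two_le
  refine monotone_nat_of_le_succ fun k => ?_
  simp only [ell_prime_pow hp, Nat.add_one_ne_zero, if_false]
  rcases eq_or_ne k 0 with rfl | hk
  · push_cast; nlinarith
  · simp only [hk, if_false]
    push_cast
    have key : (p : ℝ) ^ k * (p - 1) ≤ p ^ (k + 1) * (p - 1) :=
      mul_le_mul_of_nonneg_right (pow_le_pow_right₀ (by linarith) k.le_succ) (by linarith)
    linear_combination key

section OrdCompl

variable {p n : ℕ} (hp : p.Prime) (hn : n ≠ 0)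
include hp hn

theorem ell_prime_pow_mul_ordCompl (k : ℕ) :
    ell (p ^ k * (n / p ^ n.factorization p)) = ell (p ^ k) + ell (n / p ^ n.factorization p) :=
  ell_mul_of_coprime (pow_pos hp.pos k).ne' (Nat.ordCompl_pos p hn).ne'
    ((Nat.coprime_ordCompl hp hn).pow_left k)

theorem ell_eq_ell_ordProj_add_ell_ordCompl :
    ell n = ell (p ^ n.factorization p) + ell (n / p ^ n.factorization p) := by
  conv_lhs => rw [← Nat.ordProj_mul_ordCompl_eq_self n p]
  exact ell_prime_pow_mul_ordCompl hp hn _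

theorem cast_ell_mul_prime_pow_sub (t : ℕ) :
    (ell (n * p ^ t) : ℝ) - ell n =
      ell (p ^ (n.factorization p + t)) - ell (p ^ n.factorization p) := by
  have hmul : n * p ^ t = p ^ (n.factorization p + t) * (n / p ^ n.factorization p) := by
    rw [pow_add, mul_right_comm, Nat.ordProj_mul_ordCompl_eq_self]
  rw [hmul, ell_prime_pow_mul_ordCompl hp hn, ell_eq_ell_ordProj_add_ell_ordCompl hp hn]
  push_cast
  ring

theorem cast_ell_div_prime_pow_sub {t : ℕ} (ht : t ≤ n.factorization p) :
    (ell (n / p ^ t) : ℝ) - ell n =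
      ell (p ^ (n.factorization p - t)) - ell (p ^ n.factorization p) := by
  have hdiv : n / p ^ t = p ^ (n.factorization p - t) * (n / p ^ n.factorization p) := by
    refine Nat.div_eq_of_eq_mul_left (pow_pos hp.pos t) ?_
    rw [mul_right_comm, Nat.pow_sub_mul_pow p ht, Nat.ordProj_mul_ordCompl_eq_self]
  rw [hdiv, ell_prime_pow_mul_ordCompl hp hn, ell_eq_ell_ordProj_add_ell_ordCompl hp hn]
  push_cast
  ring

end OrdCompl

theorem Nrho_ne_zero (x : ℝ) : Nrho x ≠ 0 :=
  prod_ne_zero_iff.mpr fun _ hp => pow_ne_zero _ (mem_filter.mp hp).2.ne_zero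

theorem factorization_Nrho (x : ℝ) {p : ℕ} (hp : p.Prime) (hpx : (p : ℝ) ≤ x) :
    (Nrho x).factorization p = alphaExp x p := by
  have hmem : p ∈ (range (⌊x⌋₊ + 1)).filter Nat.Prime :=
    mem_filter.mpr ⟨mem_range.mpr (Nat.lt_succ_of_le (Nat.le_floor hpx)), hp⟩
  rw [Nrho, Nat.factorization_prod fun q hq => pow_ne_zero _ (mem_filter.mp hq).2.ne_zero,
    Finsupp.finsetSum_apply, sum_eq_single_of_mem p hmem]
  · simp [hp.factorization_pow]
  · intro q hq hqp
    simp [(mem_filter.mp hq).2.factorization_pow, Finsupp.single_eq_of_ne' hqp]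

theorem benefit_Nrho_mul_prime_pow (x : ℝ) {p : ℕ} (hp : p.Prime) (t : ℕ) :
    benefit x (Nrho x * p ^ t) =
      (ell (p ^ ((Nrho x).factorization p + t)) - ell (p ^ (Nrho x).factorization p) : ℝ)
        - x / Real.log x * (t * Real.log p) := by
  have hN : (Nrho x : ℝ) ≠ 0 := by exact_mod_cast Nrho_ne_zero x
  have hlog : Real.log ((Nrho x * p ^ t : ℕ) / (Nrho x : ℝ)) = t * Real.log p := by
    push_cast
    rw [mul_div_cancel_left₀ _ hN, Real.log_pow]
  rw [benefit, hlog, ← cast_ell_mul_prime_pow_sub hp (Nrho_ne_zero x)]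

theorem benefit_Nrho_div_prime_pow (x : ℝ) {p t : ℕ} (hp : p.Prime)
    (ht : t ≤ (Nrho x).factorization p) :
    benefit x (Nrho x / p ^ t) =
      (ell (p ^ ((Nrho x).factorization p - t)) - ell (p ^ (Nrho x).factorization p) : ℝ)
        + x / Real.log x * (t * Real.log p) := by
  have hN : (Nrho x : ℝ) ≠ 0 := by exact_mod_cast Nrho_ne_zero x
  have hdvd : p ^ t ∣ Nrho x := (pow_dvd_pow p ht).trans (Nat.ordProj_dvd _ p)
  have hlog : Real.log ((Nrho x / p ^ t : ℕ) / (Nrho x : ℝ)) = -(t * Real.log p) := by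
    rw [Nat.cast_div hdvd (by exact_mod_cast (pow_pos hp.pos t).ne'), div_div_cancel_left' hN]
    push_cast
    rw [Real.log_inv, Real.log_pow]
  rw [benefit, hlog, ← cast_ell_div_prime_pow_sub hp (Nrho_ne_zero x) ht]
  ring

theorem benefit_convexity_general (x : ℝ) :
    (∀ p : ℕ, p.Prime → ∀ t : ℕ, 1 ≤ t →
      (t : ℝ) * benefit x (Nrho x * p) ≤ benefit x (Nrho x * p ^ t)) ∧
    (∀ p : ℕ, p.Prime → (p : ℝ) ≤ x →
      p ^ alphaExp x p ∣ Nrho x ∧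
      ∀ t : ℕ, 1 ≤ t → t ≤ alphaExp x p →
        (t : ℝ) * benefit x (Nrho x / p) ≤ benefit x (Nrho x / p ^ t)) := by
  refine ⟨fun p hp t _ => ?_, fun p hp hpx => ?_⟩
  · have h1 := benefit_Nrho_mul_prime_pow x hp 1
    rw [pow_one] at h1
    rw [h1, benefit_Nrho_mul_prime_pow x hp t]
    linear_combination mul_forward_diff_le_of_monotone_diff
      (f := fun k => (ell (p ^ k) : ℝ)) (monotone_ell_prime_pow_diff hp)
      ((Nrho x).factorization p) t
  · rw [← factorization_Nrho x hp hpx]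
    refine ⟨Nat.ordProj_dvd _ p, fun t ht htv => ?_⟩
    have h1 := benefit_Nrho_div_prime_pow x hp (ht.trans htv)
    rw [pow_one] at h1
    rw [h1, benefit_Nrho_div_prime_pow x hp htv]
    linear_combination mul_backward_diff_le_of_monotone_diff
      (f := fun k => (ell (p ^ k) : ℝ)) (monotone_ell_prime_pow_diff hp) htv

/-- For `ρ > 2/log 2` and `x > 4` with `ρ = x/log x`, and `N = N_ρ`:
(a) `ben(N p^t) ≥ t · ben(N p)` for every prime `p` and every `t ≥ 1`;
(b) for every prime `p ≤ x` one has `p^{α_p} ∣ N` and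
`ben(N / p^t) ≥ t · ben(N / p)` for `1 ≤ t ≤ α_p`. -/
theorem benefit_convexity (ρ x : ℝ)
    (hρ : 2 / Real.log 2 < ρ) (hx : 4 < x) (hρx : ρ = x / Real.log x) :
    (∀ p : ℕ, p.Prime → ∀ t : ℕ, 1 ≤ t →
      (t : ℝ) * benefit x (Nrho x * p) ≤ benefit x (Nrho x * p ^ t)) ∧
    (∀ p : ℕ, p.Prime → (p : ℝ) ≤ x →
      p ^ alphaExp x p ∣ Nrho x ∧
      ∀ t : ℕ, 1 ≤ t → t ≤ alphaExp x p →
        (t : ℝ) * benefit x (Nrho x / p) ≤ benefit x (Nrho x / p ^ t)) :=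
  benefit_convexity_general x
end
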